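/- Let $a < b$ and $d \ge 1$, and let $\mathcal{D} \subseteq C^d([a,b];\mathbb{R}^n)$ be the set of functions $u$ satisfying $\sum_{k=0}^{d-1}[B_{j,k} u^{(k)}(a) + C_{j,k} u^{(k)}(b)] = 0$ for $j = 0, \dots, d-1$, for given matrices $B_{j,k}, C_{j,k} \in \mathbb{R}^{n\times n}$. Suppose $u \in \mathcal{D}$ and let $H_a, H_b \in \mathbb{R}^{nd \times nd}$ be the block matrices with $(j,k)$ blocks $B_{j,k}$ and $C_{j,k}$, and assume $H_a + H_b Q(b-a)$ is invertible, where $Q(z)$ is the block upper-triangular matrix with $(i,j)$ block $\frac{z^{j-i}}{(j-i)!} I_n$ for $j \ge i$. Then the vector of boundary values $(u(a), u'(a), \dots, u^{(d-1)}(a))$ satisfies $(u(a), \dots, u^{(d-1)}(a)) = -\int_a^b (H_a + H_b Q(b-a))^{-1} H_b\, \mathbf{e}_d(b - \theta)\, u^{(d)}(\theta)\, d\theta$, where $\mathbf{e}_d(z) = (z^{d-1}/(d-1)!, \dots, z, 1)^T \otimes I_n$. -/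

import Mathlib

/-!
Taylor's formula with integral remainder, applied to each `u^{(m)}` with `m < d`, expresses the
jet `(u(b), …, u^{(d-1)}(b))` as `Q(b-a)` times the jet at `a` plus `∫ e_d(b-θ) u^{(d)}(θ) dθ`.
Substituting this into the block form `H_a (jet at a) + H_b (jet at b) = 0` of the boundary
conditions leaves `(H_a + H_b Q(b-a)) (jet at a) = -H_b ∫ e_d(b-θ) u^{(d)}(θ) dθ`, which is
solved by inverting `H_a + H_b Q(b-a)`.
-/

open MeasureTheory intervalIntegral Matrix

open scoped Nat

theorem taylor_integral_remainder_of_contDiff {F : Type*} [NormedAddCommGroup F]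
    [NormedSpace ℝ F] [CompleteSpace F] {f : ℝ → F} {N : ℕ} (hf : ContDiff ℝ (N + 1 : ℕ) f)
    (a b : ℝ) :
    f b = ∑ k ∈ Finset.range (N + 1), ((k ! : ℝ)⁻¹ * (b - a) ^ k) • iteratedDeriv k f a +
      ∫ t in a..b, ((b - t) ^ N / N !) • iteratedDeriv (N + 1) f t := by
  rcases eq_or_ne a b with rfl | hab
  · simp [Finset.sum_range_succ']
  have hWithin : ∀ k ≤ N + 1, ∀ t ∈ Set.uIcc a b,
      iteratedDerivWithin k f (Set.uIcc a b) t = iteratedDeriv k f t := fun k hk t ht =>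
    iteratedDerivWithin_eq_iteratedDeriv (uniqueDiffOn_uIcc hab)
      (hf.of_le (by exact_mod_cast hk)).contDiffAt ht
  have h := taylor_integral_remainder (x₀ := a) (x := b) hf.contDiffOn
  rw [taylor_within_apply, sub_eq_iff_eq_add'] at h
  rw [h, integral_congr fun t ht => by rw [hWithin (N + 1) le_rfl t ht]]
  congr 1
  refine Finset.sum_congr rfl fun k hk => ?_
  rw [hWithin k (by simp at hk; omega) a Set.left_mem_uIcc]

theorem iteratedDeriv_iteratedDeriv {F : Type*} [NormedAddCommGroup F] [NormedSpace ℝ F]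
    (f : ℝ → F) (k m : ℕ) : iteratedDeriv k (iteratedDeriv m f) = iteratedDeriv (k + m) f := by
  simp only [iteratedDeriv_eq_iterate, Function.iterate_add_apply]

theorem intervalIntegral_apply {ι : Type*} [Fintype ι] {E : ι → Type*}
    [∀ i, NormedAddCommGroup (E i)] [∀ i, NormedSpace ℝ (E i)] [∀ i, CompleteSpace (E i)]
    {F : ℝ → ∀ i, E i} {a b : ℝ} (hF : IntervalIntegrable F volume a b) (i : ι) :
    (∫ θ in a..b, F θ) i = ∫ θ in a..b, F θ i :=
  ((ContinuousLinearMap.proj (R := ℝ) i).intervalIntegral_comp_comm hF).symm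

theorem Matrix.comp_mulVec_apply {I J K L R : Type*} [Fintype J] [Fintype L]
    [NonUnitalNonAssocSemiring R] (M : Matrix I J (Matrix K L R)) (v : J × L → R)
    (i : I) (k : K) :
    (comp I J K L R M *ᵥ v) (i, k) = ∑ j, (M i j *ᵥ fun l => v (j, l)) k := by
  simp [mulVec, dotProduct, Fintype.sum_prod_type]

theorem Matrix.mulVec_intervalIntegral {ι κ : Type*} [Fintype κ] (M : Matrix ι κ ℝ)
    {F : ℝ → κ → ℝ} {a b : ℝ} (hF : ∀ q, IntervalIntegrable (fun θ => F θ q) volume a b) :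
    M *ᵥ (fun q => ∫ θ in a..b, F θ q) = fun p => ∫ θ in a..b, (M *ᵥ F θ) p := by
  funext p
  simp only [mulVec, dotProduct]
  rw [intervalIntegral.integral_finsetSum fun q _ => (hF q).const_mul _]
  simp only [intervalIntegral.integral_const_mul]

theorem Matrix.eq_neg_inv_mul_mulVec_of_mulVec_add_mulVec_eq_zero {ι R : Type*} [Fintype ι]
    [DecidableEq ι] [CommRing R] {Ha Hb Q : Matrix ι ι R} {v w r : ι → R}
    (hbc : Ha *ᵥ v + Hb *ᵥ w = 0) (hw : w = Q *ᵥ v + r) (hA : IsUnit (Ha + Hb * Q).det) :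
    v = -(((Ha + Hb * Q)⁻¹ * Hb) *ᵥ r) := by
  have hAv : (Ha + Hb * Q) *ᵥ v = -(Hb *ᵥ r) := by
    rw [add_mulVec, ← mulVec_mulVec, eq_neg_iff_add_eq_zero, ← hbc, hw, mulVec_add]
    abel
  rw [← mulVec_mulVec, ← mulVec_neg, ← hAv, mulVec_mulVec, nonsing_inv_mul _ hA, one_mulVec]

/-- The paper's `Q(z)`; the index `(i, l) : Fin d × Fin n` is row `l` of block row `i`. -/
noncomputable def taylorShift (d n : ℕ) (z : ℝ) :
    Matrix (Fin d × Fin n) (Fin d × Fin n) ℝ := fun p q =>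
  if (p.1 : ℕ) ≤ (q.1 : ℕ) ∧ p.2 = q.2 then
    z ^ ((q.1 : ℕ) - (p.1 : ℕ)) / (Nat.factorial ((q.1 : ℕ) - (p.1 : ℕ)) : ℝ)
  else 0

theorem taylorShift_mulVec_apply {d n : ℕ} (z : ℝ) (w : ℕ → Fin n → ℝ) (m : Fin d)
    (l : Fin n) :
    (taylorShift d n z *ᵥ fun p => w p.1 p.2) (m, l) =
      ∑ k ∈ Finset.range (d - m), z ^ k / k ! * w (k + m) l := by
  have hrow : ∀ j : Fin d, ∑ l', taylorShift d n z (m, l) (j, l') * w j l' =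
      if (m : ℕ) ≤ j then z ^ ((j : ℕ) - m) / ((j : ℕ) - m) ! * w j l else 0 := by
    intro j
    split_ifs with h <;> simp [taylorShift, h, eq_comm (a := l)]
  simp only [mulVec, dotProduct, Fintype.sum_prod_type, hrow]
  rw [Fin.sum_univ_eq_sum_range (fun j => if m ≤ j then z ^ (j - m) / (j - m) ! * w j l else 0),
    ← Finset.sum_filter]
  have hIco : (Finset.range d).filter (fun j => (m : ℕ) ≤ j) = Finset.Ico (m : ℕ) d := by
    ext; simp [and_comm]
  rw [hIco, Finset.sum_Ico_eq_sum_range]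
  refine Finset.sum_congr rfl fun k _ => ?_
  rw [Nat.add_sub_cancel_left, Nat.add_comm]

noncomputable def jet (d : ℕ) {n : ℕ} (u : ℝ → Fin n → ℝ) (x : ℝ) : Fin d × Fin n → ℝ :=
  fun p => iteratedDeriv p.1 u x p.2

/-- The integrand `e_d(b - θ) u^{(d)}(θ)` of the paper. -/
noncomputable def taylorKernel (d : ℕ) {n : ℕ} (u : ℝ → Fin n → ℝ) (b θ : ℝ) :
    Fin d × Fin n → ℝ :=
  fun p => (b - θ) ^ (d - 1 - p.1) / (d - 1 - p.1)! * iteratedDeriv d u θ p.2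

section

variable {d n : ℕ} {u : ℝ → Fin n → ℝ}

theorem continuous_taylorKernel_apply (hu : ContDiff ℝ d u) (b : ℝ) (p : Fin d × Fin n) :
    Continuous fun θ => taylorKernel d u b θ p :=
  ((continuous_const.sub continuous_id).pow _ |>.div_const _).mul
    ((continuous_apply p.2).comp (hu.continuous_iteratedDeriv d le_rfl))

theorem jet_eq_taylorShift_mulVec_add (hu : ContDiff ℝ d u) (a b : ℝ) :
    jet d u b = taylorShift d n (b - a) *ᵥ jet d u a +
      fun p => ∫ θ in a..b, taylorKernel d u b θ p := by
  funext ⟨m, l⟩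
  set N := d - 1 - m
  have hNm : N + 1 + m = d := by omega
  have hf : ContDiff ℝ (N + 1 : ℕ) (iteratedDeriv m u) := by
    rw [iteratedDeriv_eq_iterate]
    exact ContDiff.iterate_deriv' _ _ (by rwa [hNm])
  have hrem : IntervalIntegrable
      (fun t => ((b - t) ^ N / N !) • iteratedDeriv (N + 1 + m) u t) volume a b := by
    rw [hNm]
    exact ((continuous_const.sub continuous_id).pow N |>.div_const _ |>.smul
      (hu.continuous_iteratedDeriv d le_rfl)).intervalIntegrable a b
  have hTaylor := congrFun (taylor_integral_remainder_of_contDiff hf a b) l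
  simp only [iteratedDeriv_iteratedDeriv, Pi.add_apply, Finset.sum_apply, Pi.smul_apply,
    smul_eq_mul, intervalIntegral_apply hrem] at hTaylor
  rw [Pi.add_apply]
  unfold jet
  rw [hTaylor, taylorShift_mulVec_apply (b - a) (fun k => iteratedDeriv k u a),
    show d - m = N + 1 by omega, hNm]
  congr 1
  exact Finset.sum_congr rfl fun k _ => by ring

theorem comp_mulVec_jet_add_comp_mulVec_jet_eq_zero
    (B C : Fin d → Fin d → Matrix (Fin n) (Fin n) ℝ) (a b : ℝ)
    (hbc : ∀ j : Fin d,
      ∑ k : Fin d, ((B j k).mulVec (iteratedDeriv (k : ℕ) u a) +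
        (C j k).mulVec (iteratedDeriv (k : ℕ) u b)) = 0) :
    comp _ _ _ _ ℝ (of B) *ᵥ jet d u a + comp _ _ _ _ ℝ (of C) *ᵥ jet d u b = 0 := by
  funext ⟨j, l⟩
  rw [Pi.add_apply, comp_mulVec_apply, comp_mulVec_apply]
  simpa only [of_apply, jet, ← Finset.sum_add_distrib, Finset.sum_apply, Pi.add_apply,
    Pi.zero_apply] using congrFun (hbc j) l

end

theorem stmt17_general (n d : ℕ) (a b : ℝ)
    (B C : Fin d → Fin d → Matrix (Fin n) (Fin n) ℝ)
    (u : ℝ → Fin n → ℝ) (hu : ContDiff ℝ d u)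
    (hbc : ∀ j : Fin d,
      ∑ k : Fin d, ((B j k).mulVec (iteratedDeriv (k : ℕ) u a) +
        (C j k).mulVec (iteratedDeriv (k : ℕ) u b)) = 0)
    (Ha Hb Q : Matrix (Fin d × Fin n) (Fin d × Fin n) ℝ)
    (hHa : ∀ p q : Fin d × Fin n, Ha p q = B p.1 q.1 p.2 q.2)
    (hHb : ∀ p q : Fin d × Fin n, Hb p q = C p.1 q.1 p.2 q.2)
    (hQ : ∀ p q : Fin d × Fin n, Q p q =
      if (p.1 : ℕ) ≤ (q.1 : ℕ) ∧ p.2 = q.2 then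
        (b - a) ^ ((q.1 : ℕ) - (p.1 : ℕ)) / (Nat.factorial ((q.1 : ℕ) - (p.1 : ℕ)) : ℝ)
      else 0)
    (hinv : IsUnit (Ha + Hb * Q).det) :
    ∀ (k : Fin d) (i : Fin n),
      iteratedDeriv (k : ℕ) u a i =
        -∫ θ in a..b, ∑ p : Fin d × Fin n,
          ((Ha + Hb * Q)⁻¹ * Hb) (k, i) p *
            ((b - θ) ^ (d - 1 - (p.1 : ℕ)) / (Nat.factorial (d - 1 - (p.1 : ℕ)) : ℝ) *
              iteratedDeriv d u θ p.2) := by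
  intro k i
  obtain rfl : Ha = comp _ _ _ _ ℝ (of B) := Matrix.ext hHa
  obtain rfl : Hb = comp _ _ _ _ ℝ (of C) := Matrix.ext hHb
  obtain rfl : Q = taylorShift d n (b - a) := Matrix.ext hQ
  have hjet := eq_neg_inv_mul_mulVec_of_mulVec_add_mulVec_eq_zero
    (comp_mulVec_jet_add_comp_mulVec_jet_eq_zero B C a b hbc)
    (jet_eq_taylorShift_mulVec_add hu a b) hinv
  rw [mulVec_intervalIntegral _ fun p =>
    (continuous_taylorKernel_apply hu b p).intervalIntegrable a b] at hjet
  exact congrFun hjet (k, i)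

theorem stmt17 (n d : ℕ) (hd : 1 ≤ d) (a b : ℝ) (hab : a < b)
    (B C : Fin d → Fin d → Matrix (Fin n) (Fin n) ℝ)
    (u : ℝ → Fin n → ℝ) (hu : ContDiff ℝ d u)
    (hbc : ∀ j : Fin d,
      ∑ k : Fin d, ((B j k).mulVec (iteratedDeriv (k : ℕ) u a) +
        (C j k).mulVec (iteratedDeriv (k : ℕ) u b)) = 0)
    (Ha Hb Q : Matrix (Fin d × Fin n) (Fin d × Fin n) ℝ)
    (hHa : ∀ p q : Fin d × Fin n, Ha p q = B p.1 q.1 p.2 q.2)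
    (hHb : ∀ p q : Fin d × Fin n, Hb p q = C p.1 q.1 p.2 q.2)
    (hQ : ∀ p q : Fin d × Fin n, Q p q =
      if (p.1 : ℕ) ≤ (q.1 : ℕ) ∧ p.2 = q.2 then
        (b - a) ^ ((q.1 : ℕ) - (p.1 : ℕ)) / (Nat.factorial ((q.1 : ℕ) - (p.1 : ℕ)) : ℝ)
      else 0)
    (hinv : IsUnit (Ha + Hb * Q).det) :
    ∀ (k : Fin d) (i : Fin n),
      iteratedDeriv (k : ℕ) u a i =
        -∫ θ in a..b, ∑ p : Fin d × Fin n,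
          ((Ha + Hb * Q)⁻¹ * Hb) (k, i) p *
            ((b - θ) ^ (d - 1 - (p.1 : ℕ)) / (Nat.factorial (d - 1 - (p.1 : ℕ)) : ℝ) *
              iteratedDeriv d u θ p.2) :=
  stmt17_general n d a b B C u hu hbc Ha Hb Q hHa hHb hQ hinv
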